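/- arXiv:2012.08010 — 2 statements merged into one kernel-verified Lean document; each statement's English description precedes it below -/
import Mathlib

section
/- Let n ≥ 1 and let X = ⟨X₀ ⊔ ⋯ ⊔ Xₙ; {g_k}, {≤ᵏ}, {≤ʲᵏ}, T⟩ be a multi-sorted topological structure in the signature of M̃_n. Then X belongs to IScP(M̃_n), i.e., X is isomorphic to a topologically closed substructure of a power M̃_nˢ for some nonempty set S, if and only if X satisfies axioms (A1)–(A7). -/
/-!
STATEMENT 0: Let n ≥ 1 and let X = ⟨X₀ ⊔ ⋯ ⊔ Xₙ; {g_k}, {≤ᵏ}, {≤ʲᵏ}, T⟩ be a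
multi-sorted topological structure in the signature of M̃_n.  Then X belongs to
IScP(M̃_n), i.e., X is isomorphic to a topologically closed substructure of a
power M̃_nˢ for some nonempty set S, if and only if X satisfies axioms (A1)–(A7).
-/

namespace ExpandingBelnap
/-! ### The alter ego `M̃ₙ`

The sorts are `M₀ = {⊤⁰, f⁰, t⁰, ⊥⁰}` and `M_k = {⊤ᵏ, fᵏ, 0ᵏ, tᵏ, 1ᵏ, ⊥ᵏ}` for
`k ∈ [1, n]`.  We realise the combined carrier as the type `MElt n`, where
`MElt.m0 a` is the element `a` of the sort `M₀` and `MElt.mk i v` is the element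
`v` of the sort `M_{i+1}` (for `i : Fin n`). -/

/-- The four-element sort `M₀ = {⊤⁰, f⁰, t⁰, ⊥⁰}`. -/
inductive MZero : Type
  | top | fls | tru | bot
  deriving DecidableEq

instance : Fintype MZero :=
  ⟨{.top, .fls, .tru, .bot}, fun x => by cases x <;> decide⟩

/-- The six-element sort `M_k = {⊤ᵏ, fᵏ, 0ᵏ, tᵏ, 1ᵏ, ⊥ᵏ}`. -/
inductive MSix : Type
  | top | fls | zer | tru | one | bot
  deriving DecidableEq

instance : Fintype MSix :=
  ⟨{.top, .fls, .zer, .tru, .one, .bot}, fun x => by cases x <;> decide⟩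

/-- The combined carrier `M₀ ⊔ M₁ ⊔ ⋯ ⊔ Mₙ` of the alter ego `M̃ₙ`. -/
inductive MElt (n : ℕ) : Type
  | m0 : MZero → MElt n
  | mk : Fin n → MSix → MElt n
  deriving DecidableEq, Fintype

/-- The topology on `M̃ₙ` is discrete. -/
instance (n : ℕ) : TopologicalSpace (MElt n) := ⊥

/-- The sort of an element of `M̃ₙ`. -/
def msort {n : ℕ} : MElt n → Fin (n + 1)
  | .m0 _ => 0
  | .mk i _ => i.succ

/-- The six-to-four-element projection underlying `g_k : M_k → M₀`:
`⊤ᵏ ↦ ⊤⁰`, `⊥ᵏ ↦ ⊥⁰`, `fᵏ, 0ᵏ ↦ f⁰`, `tᵏ, 1ᵏ ↦ t⁰`. -/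
def mproj : MSix → MZero
  | .top => .top
  | .bot => .bot
  | .fls => .fls
  | .zer => .fls
  | .tru => .tru
  | .one => .tru

/-- The combined operation of `M̃ₙ`: it is `g_k` on the sort `M_k` (`k ∈ [1, n]`)
and the identity on the sort `M₀`. -/
def mg {n : ℕ} : MElt n → MElt n
  | .m0 a => .m0 a
  | .mk _ v => .m0 (mproj v)

/-- The relation `≤⁰ = (M₀ × {⊤⁰}) ∪ ({⊥⁰} × M₀) ∪ {(f⁰,f⁰), (t⁰,t⁰)}` on `M₀`. -/
def mr0 : MZero → MZero → Prop := fun a b => b = .top ∨ a = .bot ∨ a = b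

/-- The pattern common to the relations `≤ᵏ` and `≤ʲᵏ` on the six-element sorts:
`{(⊤,⊤), (⊥,⊥), (f,f), (f,0), (0,0), (t,t), (t,1), (1,1)}`. -/
def mr6 : MSix → MSix → Prop :=
  fun v w => v = w ∨ (v = .fls ∧ w = .zer) ∨ (v = .tru ∧ w = .one)

/-- The combined relation of `M̃ₙ`: it is `≤⁰` within the sort `M₀`, `≤ᵏ` within a
sort `M_k` with `k ∈ [1, n]`, the relation `≤ʲᵏ` from `M_j` to `M_k` when
`1 ≤ j < k ≤ n`, and empty between all other pairs of sorts. -/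
def mr {n : ℕ} : MElt n → MElt n → Prop := fun x y =>
  match x, y with
  | .m0 a, .m0 b => mr0 a b
  | .mk i v, .mk j w => i ≤ j ∧ mr6 v w
  | _, _ => False
/-! ### Multi-sorted topological structures in the signature of the alter ego `M̃ₙ`

A multi-sorted topological structure `X = ⟨X₀ ⊔ ⋯ ⊔ Xₙ; {g_k}, {≤ᵏ}, {≤ʲᵏ}, T⟩` is
presented by a single carrier `C` (the disjoint union), a `sort` map `C → Fin (n+1)`
(each sort being clopen, which encodes the disjoint-union topology), a combined
operation `g : C → C` (equal to `g_k` on the sort-`k` part for `k ≥ 1` and to the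
identity on the sort-`0` part), and a combined relation `r : C → C → Prop`
(equal to `≤ᵏ` on pairs within sort `k` and to `≤ʲᵏ` on pairs from sort `j` to
sort `k` for `1 ≤ j < k`, and empty on all other pairs of sorts). -/

/-- `U` is an up-set for the relation `r`. -/
def IsUpset {C : Type} (r : C → C → Prop) (U : Set C) : Prop :=
  ∀ x ∈ U, ∀ y, r x y → y ∈ U

/-- `⟨C; r, T⟩` is a Priestley space: `r` is a partial order and the space is
compact and totally order-disconnected. -/
def IsPriestley (C : Type) [TopologicalSpace C] (r : C → C → Prop) : Prop :=
  (∀ x, r x x) ∧ (∀ x y, r x y → r y x → x = y) ∧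
    (∀ x y z, r x y → r y z → r x z) ∧ CompactSpace C ∧
    ∀ x y, ¬ r x y → ∃ U : Set C, IsClopen U ∧ IsUpset r U ∧ x ∈ U ∧ y ∉ U

/-- `(C, sort, g, r)` presents a multi-sorted topological structure in the signature
of `M̃ₙ`: the sorts are clopen (disjoint-union topology), `g` maps into sort `0` and
restricts to the identity on sort `0`, and the relation only relates pairs within a
sort or from sort `j` to sort `k` where `1 ≤ j < k`. -/
def IsMS {n : ℕ} {C : Type} [TopologicalSpace C]
    (sort : C → Fin (n + 1)) (g : C → C) (r : C → C → Prop) : Prop :=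
  (∀ k, IsClopen {x | sort x = k}) ∧
    (∀ x, sort (g x) = 0) ∧
    (∀ x, sort x = 0 → g x = x) ∧
    (∀ x y, r x y → sort x = sort y ∨ (0 < (sort x).val ∧ (sort x).val < (sort y).val))

/-- (A1): each `g_k : X_k → X₀` is continuous (`k ∈ [1, n]`). -/
def AxA1 {n : ℕ} {C : Type} [TopologicalSpace C]
    (sort : C → Fin (n + 1)) (g : C → C) : Prop :=
  ∀ k : Fin (n + 1), 0 < k.val → Continuous fun x : {x : C // sort x = k} => g x.1

/-- (A2): for `k ∈ [1, n]` and `x, y ∈ X_k`, `x ≤ᵏ y` implies `g_k x = g_k y`. -/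
def AxA2 {n : ℕ} {C : Type}
    (sort : C → Fin (n + 1)) (g : C → C) (r : C → C → Prop) : Prop :=
  ∀ x y, sort x = sort y → 0 < (sort x).val → r x y → g x = g y

/-- (A3): for `1 ≤ j < k`, `x ∈ X_j`, `y ∈ X_k`, `x ≤ʲᵏ y` implies `g_j x = g_k y`. -/
def AxA3 {n : ℕ} {C : Type}
    (sort : C → Fin (n + 1)) (g : C → C) (r : C → C → Prop) : Prop :=
  ∀ x y, 0 < (sort x).val → (sort x).val < (sort y).val → r x y → g x = g y

/-- (A4): for `1 ≤ j < k`, `x, y ∈ X_j`, `u, v ∈ X_k`: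
`x ≤ʲ y`, `y ≤ʲᵏ u`, `u ≤ᵏ v` imply `x ≤ʲᵏ v`. -/
def AxA4 {n : ℕ} {C : Type} (sort : C → Fin (n + 1)) (r : C → C → Prop) : Prop :=
  ∀ x y u v, 0 < (sort x).val → sort x = sort y → (sort y).val < (sort u).val →
    sort u = sort v → r x y → r y u → r u v → r x v

/-- (A5): for `1 ≤ j < k < l`, `x ∈ X_j`, `y ∈ X_k`, `z ∈ X_l`:
`x ≤ʲᵏ y` and `y ≤ᵏˡ z` imply `x ≤ʲˡ z`. -/
def AxA5 {n : ℕ} {C : Type} (sort : C → Fin (n + 1)) (r : C → C → Prop) : Prop :=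
  ∀ x y z, 0 < (sort x).val → (sort x).val < (sort y).val →
    (sort y).val < (sort z).val → r x y → r y z → r x z

/-- (A6): each `⟨X_k; ≤ᵏ, T_k⟩` is a Priestley space (`k ∈ [0, n]`). -/
def AxA6 {n : ℕ} {C : Type} [TopologicalSpace C]
    (sort : C → Fin (n + 1)) (r : C → C → Prop) : Prop :=
  ∀ k : Fin (n + 1), IsPriestley {x : C // sort x = k} fun a b => r a.1 b.1

/-- `U j, …, U k` is a mutually increasing family: each `U l` is a subset of `X_l`,
each `U l` is an up-set of `⟨X_l; ≤ˡ⟩`, and for `max(1,j) ≤ i ≤ l ≤ k`,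
`x ∈ U i`, `y ∈ X_l` and `x ≤ⁱˡ y` imply `y ∈ U l`. -/
def MutInc {n : ℕ} {C : Type} (sort : C → Fin (n + 1)) (r : C → C → Prop)
    (j k : Fin (n + 1)) (U : Fin (n + 1) → Set C) : Prop :=
  (∀ l, j ≤ l → l ≤ k → U l ⊆ {x | sort x = l}) ∧
    ∀ i l, j ≤ i → i ≤ l → l ≤ k → (i = l ∨ 0 < i.val) →
      ∀ x ∈ U i, ∀ y, sort y = l → r x y → y ∈ U l

/-- `U` is a clopen subset of the sort-`l` subspace `⟨X_l; T_l⟩`. -/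
def ClopenSort {n : ℕ} {C : Type} [TopologicalSpace C]
    (sort : C → Fin (n + 1)) (l : Fin (n + 1)) (U : Set C) : Prop :=
  IsClopen {z : {x : C // sort x = l} | z.1 ∈ U}

/-- (A7): for `1 ≤ j < k`, `x ∈ X_j`, `y ∈ X_k` with `x ≰ʲᵏ y`, there is a mutually
increasing family of clopen up-sets `U j, …, U k` with `x ∈ U j` and `y ∉ U k`. -/
def AxA7 {n : ℕ} {C : Type} [TopologicalSpace C]
    (sort : C → Fin (n + 1)) (r : C → C → Prop) : Prop :=
  ∀ j k : Fin (n + 1), 0 < j.val → j < k → ∀ x y, sort x = j → sort y = k → ¬ r x y →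
    ∃ U : Fin (n + 1) → Set C, MutInc sort r j k U ∧
      (∀ l, j ≤ l → l ≤ k → ClopenSort sort l (U l)) ∧ x ∈ U j ∧ y ∉ U k

/-- The conjunction of axioms (A1)–(A7). -/
def AxiomsA {n : ℕ} {C : Type} [TopologicalSpace C]
    (sort : C → Fin (n + 1)) (g : C → C) (r : C → C → Prop) : Prop :=
  AxA1 sort g ∧ AxA2 sort g r ∧ AxA3 sort g r ∧ AxA4 sort r ∧ AxA5 sort r ∧
    AxA6 sort r ∧ AxA7 sort r

/-- `X = (C, sort, g, r)` belongs to `IScP(M̃ₙ)`: there is a nonempty set `S` and a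
map `φ` from `C` into the power `M̃ₙ^S` (whose sort-`k` part is `M_k^S`, with the
structure computed pointwise and the product topology) such that `φ` is a
homeomorphism onto a topologically closed subset, preserves sorts, commutes with
the operations `g_k`, and preserves and reflects the relations; that is, `φ` is an
isomorphism of `X` onto a topologically closed substructure of `M̃ₙ^S`. -/
def InIScP (n : ℕ) (C : Type) [TopologicalSpace C]
    (sort : C → Fin (n + 1)) (g : C → C) (r : C → C → Prop) : Prop :=
  ∃ (S : Type) (_ : Nonempty S) (φ : C → S → MElt n),
    Topology.IsClosedEmbedding φ ∧
      (∀ x s, msort (φ x s) = sort x) ∧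
      (∀ x s, φ (g x) s = mg (φ x s)) ∧
      (∀ x y, r x y ↔ ∀ s, mr (φ x s) (φ y s))

/-!
Forward: the relation of `M̃ₙ` is a partial order along which `g` is constant on the
sorts `M_k` (`k ≥ 1`), and each coordinate of the power `M̃ₙ^S` cuts out clopen up-sets;
all of this passes to a closed substructure, giving (A1)–(A7).

Backward: embed `X` into `M̃ₙ^S`, where `S` is the set of continuous morphisms `X → M̃ₙ`.
As `X` is compact it suffices that morphisms separate `x ≰ y`. A clopen up-set `U` of
`X₀` yields the morphism `z ↦ ⊤` or `⊥` according as `g z ∈ U`. For `x ∈ X_j`, `y ∈ X_k`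
with `1 ≤ j ≤ k`, a mutually increasing family `U_j, …, U_k` (from (A6) if `j = k`, from
(A7) otherwise), extended by `∅` below `j` and by the whole sorts above `k`, is a clopen
up-set `P` of `X`, and yields the morphism `z ↦ 0` or `f` according as `z ∈ P` (and `f⁰`
on `X₀`). If no relation joins the sorts of `x` and `y`, every morphism separates them.
-/

section AlterEgo

variable {n : ℕ}

instance : DiscreteTopology (MElt n) := ⟨rfl⟩

def SortRel (k l : Fin (n + 1)) : Prop := k = 0 ∧ l = 0 ∨ k ≠ 0 ∧ k ≤ l

lemma mr_refl (p : MElt n) : mr p p := by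
  rcases p with a | ⟨i, v⟩
  · exact Or.inr (Or.inr rfl)
  · exact ⟨le_rfl, Or.inl rfl⟩

lemma mr_trans {p q t : MElt n} (hpq : mr p q) (hqt : mr q t) : mr p t := by
  have h0 : ∀ a b c : MZero, mr0 a b → mr0 b c → mr0 a c := by unfold mr0; decide
  have h6 : ∀ u v w : MSix, mr6 u v → mr6 v w → mr6 u w := by unfold mr6; decide
  rcases p with a | ⟨i, u⟩ <;> rcases q with b | ⟨j, v⟩ <;> rcases t with c | ⟨k, w⟩ <;>
    simp only [mr] at hpq hqt ⊢
  exacts [h0 a b c hpq hqt, ⟨hpq.1.trans hqt.1, h6 u v w hpq.2 hqt.2⟩]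

lemma mr_antisymm {p q : MElt n} (hpq : mr p q) (hqp : mr q p) : p = q := by
  have h0 : ∀ a b : MZero, mr0 a b → mr0 b a → a = b := by unfold mr0; decide
  have h6 : ∀ v w : MSix, mr6 v w → mr6 w v → v = w := by unfold mr6; decide
  rcases p with a | ⟨i, v⟩ <;> rcases q with b | ⟨j, w⟩ <;> simp only [mr] at hpq hqp
  · rw [h0 a b hpq hqp]
  · rw [le_antisymm hpq.1 hqp.1, h6 v w hpq.2 hqp.2]

lemma mg_eq_of_mr {p q : MElt n} (h : mr p q) (hp : msort p ≠ 0) : mg p = mg q := by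
  have hproj : ∀ v w : MSix, mr6 v w → mproj v = mproj w := by unfold mr6; decide
  rcases p with a | ⟨i, v⟩ <;> rcases q with b | ⟨j, w⟩
  · exact absurd rfl hp
  · exact absurd rfl hp
  · exact h.elim
  · exact congrArg MElt.m0 (hproj v w h.2)

lemma sortRel_msort_of_mr {p q : MElt n} (h : mr p q) : SortRel (msort p) (msort q) := by
  rcases p with a | ⟨i, v⟩ <;> rcases q with b | ⟨j, w⟩
  · exact Or.inl ⟨rfl, rfl⟩
  · exact h.elim
  · exact h.elim
  · exact Or.inr ⟨Fin.succ_ne_zero i, Fin.succ_le_succ_iff.mpr h.1⟩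

def MElt.ofSort (k : Fin (n + 1)) (a : MZero) (v : MSix) : MElt n :=
  if h : k = 0 then .m0 a else .mk (k.pred h) v

@[simp]
lemma MElt.ofSort_zero (a : MZero) (v : MSix) : MElt.ofSort (n := n) 0 a v = .m0 a := rfl

@[simp]
lemma msort_ofSort (k : Fin (n + 1)) (a : MZero) (v : MSix) :
    msort (MElt.ofSort k a v) = k := by
  unfold MElt.ofSort
  split_ifs with h
  · exact h.symm
  · exact Fin.succ_pred k h

lemma mg_ofSort (k : Fin (n + 1)) {a : MZero} {v : MSix} (h : mproj v = a) :
    mg (MElt.ofSort k a v) = .m0 a := by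
  unfold MElt.ofSort
  split_ifs
  · rfl
  · exact congrArg MElt.m0 h

lemma mr_ofSort_iff {k l : Fin (n + 1)} (hk : k ≠ 0) (hl : l ≠ 0) (a b : MZero) (v w : MSix) :
    mr (MElt.ofSort k a v) (MElt.ofSort l b w) ↔ k ≤ l ∧ mr6 v w := by
  simp only [MElt.ofSort, dif_neg hk, dif_neg hl, mr, Fin.pred_le_pred_iff]

end AlterEgo

section Forward

variable {C : Type} {r : C → C → Prop}

lemma isPriestley_subtype [TopologicalSpace C] [CompactSpace C] (hrefl : ∀ x, r x x)
    (hanti : ∀ x y, r x y → r y x → x = y) (htrans : ∀ x y z, r x y → r y z → r x z)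
    (hsep : ∀ x y, ¬ r x y → ∃ U : Set C, IsClopen U ∧ IsUpset r U ∧ x ∈ U ∧ y ∉ U)
    {p : C → Prop} (hp : IsClosed {x | p x}) :
    IsPriestley {x // p x} fun a b => r a.1 b.1 := by
  refine ⟨fun a => hrefl a, fun a b hab hba => Subtype.ext (hanti a b hab hba),
    fun a b c => htrans a b c, isCompact_iff_compactSpace.mp hp.isCompact, fun a b hab => ?_⟩
  obtain ⟨U, hU, hUup, haU, hbU⟩ := hsep a b hab
  exact ⟨Subtype.val ⁻¹' U, hU.preimage continuous_subtype_val,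
    fun c hc d hcd => hUup c hc d hcd, haU, hbU⟩

lemma axA7_of_separating [TopologicalSpace C] {n : ℕ} (sort : C → Fin (n + 1))
    (hsep : ∀ x y, ¬ r x y → ∃ U : Set C, IsClopen U ∧ IsUpset r U ∧ x ∈ U ∧ y ∉ U) :
    AxA7 sort r := by
  intro j k _ _ x y hx hy hxy
  obtain ⟨U, hU, hUup, hxU, hyU⟩ := hsep x y hxy
  refine ⟨fun l => U ∩ {z | sort z = l}, ⟨fun l _ _ => Set.inter_subset_right,
    fun i l _ _ _ _ z hz w hw hzw => ⟨hUup z hz.1 w hzw, hw⟩⟩, fun l _ _ => ?_,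
    ⟨hxU, hx⟩, fun h => hyU h.1⟩
  have hrestrict : {z : {x // sort x = l} | z.1 ∈ U ∩ {z | sort z = l}} = Subtype.val ⁻¹' U :=
    Set.ext fun z => and_iff_left z.2
  unfold ClopenSort
  rw [hrestrict]
  exact hU.preimage continuous_subtype_val

variable {n : ℕ} {S : Type} {φ : C → S → MElt n}

lemma trans_of_iff_forall_mr (hφ : ∀ x y, r x y ↔ ∀ s, mr (φ x s) (φ y s)) (x y z : C)
    (hxy : r x y) (hyz : r y z) : r x z :=
  (hφ x z).2 fun s => mr_trans ((hφ x y).1 hxy s) ((hφ y z).1 hyz s)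

lemma eq_of_rel_of_iff_forall_mr (hinj : Function.Injective φ)
    (hφ : ∀ x y, r x y ↔ ∀ s, mr (φ x s) (φ y s)) (x y : C) (hxy : r x y) (hyx : r y x) :
    x = y :=
  hinj <| funext fun s => mr_antisymm ((hφ x y).1 hxy s) ((hφ y x).1 hyx s)

lemma exists_isClopen_isUpset_of_iff_forall_mr [TopologicalSpace C] (hφc : Continuous φ)
    (hφ : ∀ x y, r x y ↔ ∀ s, mr (φ x s) (φ y s)) (x y : C) (hxy : ¬ r x y) :
    ∃ U : Set C, IsClopen U ∧ IsUpset r U ∧ x ∈ U ∧ y ∉ U := by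
  obtain ⟨s, hs⟩ : ∃ s, ¬ mr (φ x s) (φ y s) := not_forall.mp fun h => hxy ((hφ x y).2 h)
  exact ⟨(φ · s) ⁻¹' {p | mr (φ x s) p},
    (isClopen_discrete _).preimage ((continuous_apply s).comp hφc),
    fun z hz w hzw => mr_trans hz ((hφ z w).1 hzw s), mr_refl _, hs⟩

lemma g_eq_of_rel_of_iff_forall_mr {sort : C → Fin (n + 1)} {g : C → C}
    (hinj : Function.Injective φ)
    (hsort : ∀ x s, msort (φ x s) = sort x) (hg : ∀ x s, φ (g x) s = mg (φ x s))
    (hφ : ∀ x y, r x y ↔ ∀ s, mr (φ x s) (φ y s)) {x y : C} (hx : sort x ≠ 0) (hxy : r x y) :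
    g x = g y :=
  hinj <| funext fun s => by
    rw [hg, hg]
    exact mg_eq_of_mr ((hφ x y).1 hxy s) ((hsort x s).trans_ne hx)

lemma continuous_of_semiconj [TopologicalSpace C] {g : C → C} (hφ : Topology.IsEmbedding φ)
    (hg : ∀ x s, φ (g x) s = mg (φ x s)) : Continuous g := by
  rw [hφ.continuous_iff]
  have hφg : φ ∘ g = fun x s => mg (φ x s) := funext fun x => funext (hg x)
  rw [hφg]
  exact continuous_pi fun s =>
    (continuous_of_discreteTopology (f := (mg : MElt n → MElt n))).comp
      ((continuous_apply s).comp hφ.continuous)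

lemma axiomsA_of_inIScP [TopologicalSpace C] {sort : C → Fin (n + 1)} {g : C → C}
    (hMS : IsMS sort g r) (h : InIScP n C sort g r) : AxiomsA sort g r := by
  obtain ⟨S, -, φ, hemb, hsort, hg, hφ⟩ := h
  have hinj := hemb.injective
  have : CompactSpace C := hemb.compactSpace
  have hsep := exists_isClopen_isUpset_of_iff_forall_mr hemb.continuous hφ
  have htrans := trans_of_iff_forall_mr hφ
  have hgeq : ∀ x y, 0 < (sort x).val → r x y → g x = g y := fun x y hx =>
    g_eq_of_rel_of_iff_forall_mr hinj hsort hg hφ (Fin.pos_iff_ne_zero.mp hx)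
  refine ⟨fun k _ => (continuous_of_semiconj hemb.isEmbedding hg).comp continuous_subtype_val,
    fun x y _ hx => hgeq x y hx, fun x y hx _ => hgeq x y hx,
    fun x y u v _ _ _ _ hxy hyu huv => htrans x u v (htrans x y u hxy hyu) huv,
    fun x y z _ _ _ => htrans x y z, fun k => ?_, axA7_of_separating sort hsep⟩
  exact isPriestley_subtype (fun x => (hφ x x).2 fun s => mr_refl _)
    (eq_of_rel_of_iff_forall_mr hinj hφ) htrans hsep (hMS.1 k).isClosed

end Forward

section Backward

variable {n : ℕ} {C : Type} [TopologicalSpace C] {sort : C → Fin (n + 1)} {g : C → C}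
  {r : C → C → Prop}

lemma IsMS.sortRel (hMS : IsMS sort g r) {x y : C} (h : r x y) : SortRel (sort x) (sort y) := by
  rcases hMS.2.2.2 x y h with hxy | ⟨hx, hxy⟩
  · by_cases hx : sort x = 0
    · exact Or.inl ⟨hx, hxy ▸ hx⟩
    · exact Or.inr ⟨hx, hxy.le⟩
  · exact Or.inr ⟨Fin.pos_iff_ne_zero.mp hx, (Fin.lt_def.mpr hxy).le⟩

lemma IsMS.g_eq_of_rel (hMS : IsMS sort g r) (ha2 : AxA2 sort g r) (ha3 : AxA3 sort g r)
    {x y : C} (hxy : r x y) (hx : sort x ≠ 0) : g x = g y := by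
  rcases hMS.2.2.2 x y hxy with hs | ⟨hx, hlt⟩
  · exact ha2 x y hs (Fin.pos_iff_ne_zero.mpr hx) hxy
  · exact ha3 x y hx hlt hxy

lemma IsMS.continuous_sort (hMS : IsMS sort g r) : Continuous sort :=
  continuous_discrete_rng.mpr fun k => (hMS.1 k).isOpen

lemma IsMS.continuous_of_axA1 (hMS : IsMS sort g r) (ha1 : AxA1 sort g) : Continuous g :=
  continuous_of_cover_nhds (s := fun k => {x | sort x = k})
    (fun x => ⟨sort x, (hMS.1 _).isOpen.mem_nhds rfl⟩) fun k => by
      by_cases hk : k = 0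
      · exact continuousOn_id.congr fun x hx => hMS.2.2.1 x (hx.trans hk)
      · exact continuousOn_iff_continuous_domRestrict.mpr (ha1 k (Fin.pos_iff_ne_zero.mpr hk))

lemma compactSpace_of_axA6 (ha6 : AxA6 sort r) : CompactSpace C := by
  have hcover : ⋃ k, {x | sort x = k} = Set.univ :=
    Set.iUnion_eq_univ_iff.mpr fun x => ⟨sort x, rfl⟩
  refine ⟨hcover ▸ ?_⟩
  exact isCompact_iUnion fun k => isCompact_iff_compactSpace.mpr (ha6 k).2.2.2.1

lemma isClopen_image_val {A : Set C} (hA : IsClopen A) {V : Set A} (hV : IsClopen V) :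
    IsClopen (Subtype.val '' V) :=
  ⟨hA.isClosed.isClosedMap_subtype_val _ hV.isClosed,
    hA.isOpen.isOpenMap_subtype_val _ hV.isOpen⟩

lemma IsMS.isClopen_of_isClopen_preimage_val (hMS : IsMS sort g r) {P : Set C}
    (hP : ∀ k, IsClopen (Subtype.val ⁻¹' P : Set {x // sort x = k})) : IsClopen P := by
  have hcover : P = ⋃ k, Subtype.val '' (Subtype.val ⁻¹' P : Set {x // sort x = k}) :=
    Set.ext fun z => ⟨fun hz => Set.mem_iUnion.mpr ⟨sort z, ⟨z, rfl⟩, hz, rfl⟩,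
      fun hz => by obtain ⟨k, w, hw, rfl⟩ := Set.mem_iUnion.mp hz; exact hw⟩
  rw [hcover]
  exact isClopen_iUnion_of_finite fun k =>
    isClopen_image_val (A := {x | sort x = k}) (hMS.1 k) (hP k)

def IsMorphism (sort : C → Fin (n + 1)) (g : C → C) (r : C → C → Prop) (α : C → MElt n) :
    Prop :=
  Continuous α ∧ (∀ x, msort (α x) = sort x) ∧ (∀ x, α (g x) = mg (α x)) ∧
    ∀ x y, r x y → mr (α x) (α y)

open Classical in
noncomputable def topBotMap (sort : C → Fin (n + 1)) (g : C → C) (U : Set C) :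
    C → MElt n := fun z =>
  if g z ∈ U then .ofSort (sort z) .top .top else .ofSort (sort z) .bot .bot

open Classical in
noncomputable def zeroFalseMap (sort : C → Fin (n + 1)) (P : Set C) : C → MElt n := fun z =>
  if z ∈ P then .ofSort (sort z) .fls .zer else .ofSort (sort z) .fls .fls

lemma continuous_ite_ofSort (hsort : Continuous sort) {P : Set C} (hP : IsClopen P)
    [DecidablePred (· ∈ P)] (a b : MZero) (v w : MSix) :
    Continuous fun z => if z ∈ P then MElt.ofSort (sort z) a v else .ofSort (sort z) b w :=
  Continuous.if (fun z hz => by simp [hP.frontier_eq] at hz)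
    ((continuous_of_discreteTopology (f := fun k => MElt.ofSort k a v)).comp hsort)
    ((continuous_of_discreteTopology (f := fun k => MElt.ofSort k b w)).comp hsort)

lemma isMorphism_topBotMap (hMS : IsMS sort g r) (ha1 : AxA1 sort g) (ha2 : AxA2 sort g r)
    (ha3 : AxA3 sort g r) {U : Set C} (hU : IsClopen U) (hUup : IsUpset r U) :
    IsMorphism sort g r (topBotMap sort g U) := by
  classical
  refine ⟨continuous_ite_ofSort hMS.continuous_sort (P := g ⁻¹' U)
    (hU.preimage (hMS.continuous_of_axA1 ha1)) _ _ _ _, fun z => ?_, fun z => ?_,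
    fun x y hxy => ?_⟩
  · unfold topBotMap
    split_ifs <;> exact msort_ofSort ..
  · have hgz : sort (g z) = 0 := hMS.2.1 z
    unfold topBotMap
    rw [hgz, hMS.2.2.1 (g z) hgz]
    simp only [MElt.ofSort_zero]
    split_ifs <;> exact (mg_ofSort _ (by rfl)).symm
  · rcases hMS.sortRel hxy with ⟨hx, hy⟩ | ⟨hx, hle⟩
    · have hxyU : x ∈ U → y ∈ U := fun hxU => hUup x hxU y hxy
      simp only [topBotMap, hx, hy, hMS.2.2.1 x hx, hMS.2.2.1 y hy, MElt.ofSort_zero]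
      split_ifs <;> simp_all [mr, mr0]
    · have hy : sort y ≠ 0 := ne_bot_of_le_ne_bot hx hle
      simp only [topBotMap, hMS.g_eq_of_rel ha2 ha3 hxy hx]
      split_ifs <;> exact (mr_ofSort_iff hx hy ..).2 ⟨hle, Or.inl rfl⟩

lemma isMorphism_zeroFalseMap (hMS : IsMS sort g r) {P : Set C} (hP : IsClopen P)
    (hPup : IsUpset r P) : IsMorphism sort g r (zeroFalseMap sort P) := by
  classical
  refine ⟨continuous_ite_ofSort hMS.continuous_sort hP _ _ _ _, fun z => ?_, fun z => ?_,
    fun x y hxy => ?_⟩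
  · unfold zeroFalseMap
    split_ifs <;> exact msort_ofSort ..
  · unfold zeroFalseMap
    rw [hMS.2.1 z]
    simp only [MElt.ofSort_zero]
    split_ifs <;> exact (mg_ofSort _ (by rfl)).symm
  · rcases hMS.sortRel hxy with ⟨hx, hy⟩ | ⟨hx, hle⟩
    · simp only [zeroFalseMap, hx, hy, MElt.ofSort_zero]
      split_ifs <;> exact mr_refl _
    · have hxyP : x ∈ P → y ∈ P := fun hxP => hPup x hxP y hxy
      have hy : sort y ≠ 0 := ne_bot_of_le_ne_bot hx hle
      simp only [zeroFalseMap]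
      split_ifs <;> simp_all [mr_ofSort_iff, mr6]

lemma exists_isMorphism_not_mr_of_sort_eq_zero (hMS : IsMS sort g r) (ha1 : AxA1 sort g)
    (ha2 : AxA2 sort g r) (ha3 : AxA3 sort g r) (ha6 : AxA6 sort r) {x y : C}
    (hx : sort x = 0) (hy : sort y = 0) (hxy : ¬ r x y) :
    ∃ α, IsMorphism sort g r α ∧ ¬ mr (α x) (α y) := by
  classical
  obtain ⟨U, hU, hUup, hxU, hyU⟩ := (ha6 0).2.2.2.2 ⟨x, hx⟩ ⟨y, hy⟩ hxy
  have hUup' : IsUpset r (Subtype.val '' U) := by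
    rintro _ ⟨z, hz, rfl⟩ w hzw
    have hw : sort w = 0 := by
      rcases hMS.sortRel hzw with ⟨-, hw⟩ | ⟨hz0, -⟩
      exacts [hw, absurd z.2 hz0]
    exact ⟨⟨w, hw⟩, hUup z hz ⟨w, hw⟩ hzw, rfl⟩
  refine ⟨topBotMap sort g (Subtype.val '' U), isMorphism_topBotMap hMS ha1 ha2 ha3
    (isClopen_image_val (A := {x | sort x = 0}) (hMS.1 0) hU) hUup', ?_⟩
  have hxU' : x ∈ Subtype.val '' U := ⟨_, hxU, rfl⟩
  have hyU' : y ∉ Subtype.val '' U := Subtype.val_injective.mem_set_image.not.mpr hyU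
  simp only [topBotMap, hMS.2.2.1 x hx, hMS.2.2.1 y hy, if_pos hxU', if_neg hyU', hx, hy,
    MElt.ofSort_zero]
  simp [mr, mr0]

lemma exists_mutInc_of_not_rel (ha6 : AxA6 sort r) (ha7 : AxA7 sort r) {x y : C}
    (hx : sort x ≠ 0) (hle : sort x ≤ sort y) (hxy : ¬ r x y) :
    ∃ U, MutInc sort r (sort x) (sort y) U ∧
      (∀ l, sort x ≤ l → l ≤ sort y → ClopenSort sort l (U l)) ∧
      x ∈ U (sort x) ∧ y ∉ U (sort y) := by
  rcases hle.lt_or_eq with hlt | hs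
  · exact ha7 _ _ (Fin.pos_iff_ne_zero.mpr hx) hlt x y rfl rfl hxy
  · obtain ⟨V, hV, hVup, hxV, hyV⟩ := (ha6 (sort x)).2.2.2.2 ⟨x, rfl⟩ ⟨y, hs.symm⟩ hxy
    refine ⟨fun _ => Subtype.val '' V, ⟨?_, ?_⟩, fun l hxl hly => ?_, ⟨_, hxV, rfl⟩,
      Subtype.val_injective.mem_set_image.not.mpr hyV⟩
    · rintro l hxl hly _ ⟨z, -, rfl⟩
      exact z.2.trans (le_antisymm hxl (hs ▸ hly))
    · rintro i l hxi hil hly - _ ⟨z, hz, rfl⟩ w hw hzw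
      have hl : l = sort x := le_antisymm (hs ▸ hly) (hxi.trans hil)
      exact ⟨⟨w, hw.trans hl⟩, hVup z hz ⟨w, hw.trans hl⟩ hzw, rfl⟩
    · obtain rfl : l = sort x := le_antisymm (hs ▸ hly) hxl
      simpa only [ClopenSort, Subtype.val_injective.mem_set_image, Set.ofPred_mem_eq] using hV

lemma exists_isMorphism_not_mr_of_mutInc (hMS : IsMS sort g r) {j k : Fin (n + 1)}
    (hj : j ≠ 0) (hjk : j ≤ k) {U : Fin (n + 1) → Set C} (hU : MutInc sort r j k U)
    (hUc : ∀ l, j ≤ l → l ≤ k → ClopenSort sort l (U l)) {x y : C} (hx : sort x = j)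
    (hy : sort y = k) (hxU : x ∈ U j) (hyU : y ∉ U k) :
    ∃ α, IsMorphism sort g r α ∧ ¬ mr (α x) (α y) := by
  let P : Set C := {z | j ≤ sort z ∧ (sort z ≤ k → z ∈ U (sort z))}
  have hP : IsClopen P := hMS.isClopen_of_isClopen_preimage_val fun l => by
    have hPl : (Subtype.val ⁻¹' P : Set {x // sort x = l}) =
        {z | j ≤ l ∧ (l ≤ k → z.1 ∈ U l)} := by
      ext ⟨z, rfl⟩
      rfl
    rw [hPl]
    by_cases hjl : j ≤ l
    · by_cases hlk : l ≤ k
      · simp only [hjl, hlk, true_and, forall_const]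
        exact hUc l hjl hlk
      · simp only [hjl, hlk, true_and, false_imp_iff, Set.ofPred_true, isClopen_univ]
    · simp only [hjl, false_and, Set.ofPred_false, isClopen_empty]
  have hPup : IsUpset r P := by
    rintro z ⟨hjz, hzU⟩ w hzw
    rcases hMS.sortRel hzw with ⟨hz, -⟩ | ⟨hz, hzw'⟩
    · exact absurd (le_antisymm (hz ▸ hjz) (Fin.zero_le j)) hj
    · exact ⟨hjz.trans hzw', fun hwk => hU.2 _ _ hjz hzw' hwk
        (Or.inr (Fin.pos_iff_ne_zero.mpr hz)) z (hzU (hzw'.trans hwk)) w rfl hzw⟩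
  have hxP : x ∈ P := ⟨hx.ge, fun _ => hx ▸ hxU⟩
  have hyP : y ∉ P := fun h => hyU (hy ▸ h.2 hy.le)
  refine ⟨zeroFalseMap sort P, isMorphism_zeroFalseMap hMS hP hPup, ?_⟩
  simp only [zeroFalseMap, if_pos hxP, if_neg hyP, hx, hy,
    mr_ofSort_iff hj (ne_bot_of_le_ne_bot hj hjk)]
  simp [mr6]

lemma exists_isMorphism_not_mr (hMS : IsMS sort g r) (hA : AxiomsA sort g r) {x y : C}
    (hxy : ¬ r x y) : ∃ α, IsMorphism sort g r α ∧ ¬ mr (α x) (α y) := by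
  obtain ⟨ha1, ha2, ha3, -, -, ha6, ha7⟩ := hA
  by_cases hs : SortRel (sort x) (sort y)
  · rcases hs with ⟨hx, hy⟩ | ⟨hx, hle⟩
    · exact exists_isMorphism_not_mr_of_sort_eq_zero hMS ha1 ha2 ha3 ha6 hx hy hxy
    · obtain ⟨U, hU, hUc, hxU, hyU⟩ := exists_mutInc_of_not_rel ha6 ha7 hx hle hxy
      exact exists_isMorphism_not_mr_of_mutInc hMS hx hle hU hUc rfl rfl hxU hyU
  · have hα := isMorphism_topBotMap hMS ha1 ha2 ha3 isClopen_univ fun _ _ _ _ => trivial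
    refine ⟨_, hα, fun h => hs ?_⟩
    simpa only [hα.2.1] using sortRel_msort_of_mr h

lemma inIScP_of_axiomsA (hMS : IsMS sort g r) (hA : AxiomsA sort g r) :
    InIScP n C sort g r := by
  obtain ⟨ha1, ha2, ha3, -, -, ha6, -⟩ := id hA
  have : CompactSpace C := compactSpace_of_axA6 ha6
  let S := {α : C → MElt n // IsMorphism sort g r α}
  have hrel : ∀ x y, r x y ↔ ∀ α : S, mr (α.1 x) (α.1 y) := fun x y =>
    ⟨fun hxy α => α.2.2.2.2 x y hxy, fun h => by_contra fun hxy =>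
      let ⟨α, hα, hsep⟩ := exists_isMorphism_not_mr hMS hA hxy; hsep (h ⟨α, hα⟩)⟩
  let α₀ : S := ⟨_, isMorphism_topBotMap hMS ha1 ha2 ha3 isClopen_univ fun _ _ _ _ => trivial⟩
  refine ⟨S, ⟨α₀⟩, fun x α => α.1 x, (continuous_pi fun α => α.2.1).isClosedEmbedding ?_,
    fun x α => α.2.2.1 x, fun x α => α.2.2.2.1 x, hrel⟩
  intro x y hφ
  have hφ' : ∀ α : S, α.1 x = α.1 y := congrFun hφ
  have hxy : r x y := (hrel x y).2 fun α => by rw [hφ' α]; exact mr_refl _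
  have hyx : r y x := (hrel y x).2 fun α => by rw [hφ' α]; exact mr_refl _
  have hs : sort x = sort y := by rw [← α₀.2.2.1 x, ← α₀.2.2.1 y, hφ' α₀]
  exact congrArg Subtype.val ((ha6 (sort x)).2.1 ⟨x, rfl⟩ ⟨y, hs.symm⟩ hxy hyx)

end Backward

theorem statement0_general (n : ℕ) (C : Type) [TopologicalSpace C]
    (sort : C → Fin (n + 1)) (g : C → C) (r : C → C → Prop)
    (hMS : IsMS sort g r) :
    InIScP n C sort g r ↔ AxiomsA sort g r :=
  ⟨axiomsA_of_inIScP hMS, inIScP_of_axiomsA hMS⟩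

theorem statement0 (n : ℕ) (hn : 1 ≤ n) (C : Type) [TopologicalSpace C]
    (sort : C → Fin (n + 1)) (g : C → C) (r : C → C → Prop)
    (hMS : IsMS sort g r) :
    InIScP n C sort g r ↔ AxiomsA sort g r :=
  statement0_general n C sort g r hMS

end ExpandingBelnap
end

section
/- For the four-element algebra M₀: (i) no subuniverse of M₀ × M₀ is contained in (δ₀,γ₀)⁻¹(≤) = {(a,b) : δ₀(a) ≤ γ₀(b)}, and no subuniverse of M₀ × M₀ is contained in (γ₀,δ₀)⁻¹(≤); (ii) the knowledge order ≤⁰ = (M₀ × {⊤⁰}) ∪ ({⊥⁰} × M₀) ∪ {(f⁰,f⁰),(t⁰,t⁰)} is the unique subuniverse of M₀ × M₀ that is maximal with respect to being contained in (γ₀,γ₀)⁻¹(≤); (iii) the converse relation ≥⁰ is the unique subuniverse of M₀ × M₀ maximal with respect to being contained in (δ₀,δ₀)⁻¹(≤). -/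
/-!
We realise M₀ = {⊤⁰, f⁰, t⁰, ⊥⁰} as Bool × Bool via
⊤⁰ = (true, true), t⁰ = (true, false), f⁰ = (false, true), ⊥⁰ = (false, false).
The knowledge order ≤ₖ is then the componentwise order (bottom ⊥⁰, top ⊤⁰, with
f⁰ and t⁰ incomparable), so ⊗ and ⊕ are the componentwise meet and join; the
truth order ≤ₜ is p ≤ₜ q ↔ p.1 ≤ q.1 ∧ q.2 ≤ p.2 (bottom f⁰, top t⁰, with ⊤⁰ and
⊥⁰ incomparable), so ∧ and ∨ are as below; and ¬ swaps the two components.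
The carriers are γ₀(p) = p.1 (γ₀⁻¹(1) = {⊤⁰, t⁰}) and δ₀(p) = !p.2
(δ₀⁻¹(1) = {⊥⁰, t⁰}).
-/

namespace ExpandingBelnap

/-- The carrier of the four-element algebra `M₀`. -/
abbrev MZ : Type := Bool × Bool

/-- The knowledge meet `⊗`. -/
def kmeet0 (p q : MZ) : MZ := (p.1 && q.1, p.2 && q.2)

/-- The knowledge join `⊕`. -/
def kjoin0 (p q : MZ) : MZ := (p.1 || q.1, p.2 || q.2)

/-- The truth meet `∧`. -/
def tmeet0 (p q : MZ) : MZ := (p.1 && q.1, p.2 || q.2)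

/-- The truth join `∨`. -/
def tjoin0 (p q : MZ) : MZ := (p.1 || q.1, p.2 && q.2)

/-- The negation `¬`. -/
def neg0 (p : MZ) : MZ := (p.2, p.1)

/-- The carrier `γ₀ : M₀ → {0, 1}`, with `γ₀⁻¹(1) = {⊤⁰, t⁰}`. -/
def gam0 (p : MZ) : Bool := p.1

/-- The carrier `δ₀ : M₀ → {0, 1}`, with `δ₀⁻¹(1) = {⊥⁰, t⁰}`. -/
def del0 (p : MZ) : Bool := !p.2

/-- The knowledge order `≤⁰ = (M₀ × {⊤⁰}) ∪ ({⊥⁰} × M₀) ∪ {(f⁰,f⁰), (t⁰,t⁰)}`,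
which is the componentwise order in our realisation. -/
def le0 (p q : MZ) : Prop := p.1 ≤ q.1 ∧ p.2 ≤ q.2

/-- `s` is a subuniverse of `M₀ × M₀`: it contains `(c, c)` for every constant `c`
(every element of `M₀` is a constant) and is closed under the coordinatewise
operations `⊗`, `⊕`, `∧`, `∨` and `¬`. -/
def Sub0 (s : Set (MZ × MZ)) : Prop :=
  (∀ c : MZ, (c, c) ∈ s) ∧
    ∀ p q, p ∈ s → q ∈ s →
      (kmeet0 p.1 q.1, kmeet0 p.2 q.2) ∈ s ∧
        (kjoin0 p.1 q.1, kjoin0 p.2 q.2) ∈ s ∧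
        (tmeet0 p.1 q.1, tmeet0 p.2 q.2) ∈ s ∧
        (tjoin0 p.1 q.1, tjoin0 p.2 q.2) ∈ s ∧
        (neg0 p.1, neg0 p.2) ∈ s

/-- `s` is a subuniverse of `M₀ × M₀` that is maximal with respect to being
contained in `target`. -/
def MaxSub0In (target : Set (MZ × MZ)) (s : Set (MZ × MZ)) : Prop :=
  Sub0 s ∧ s ⊆ target ∧ ∀ t, Sub0 t → t ⊆ target → s ⊆ t → t = s

/-!
Every operation of `M₀` acts on the two coordinates of `Bool × Bool` by monotone Boolean
operations, except `¬`, which swaps them; hence `≤⁰` and `≥⁰` are subuniverses. Since `γ₀ ∘ ¬`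
reads the second coordinate, closure under `¬` upgrades `γ₀(a) ≤ γ₀(b)` on a subuniverse to
the full knowledge order `a ≤⁰ b`, so `≤⁰` is the greatest subuniverse inside `(γ₀,γ₀)⁻¹(≤)`;
dually for `δ₀` and `≥⁰`. Part (i) fails already on the diagonal, at `(⊥⁰,⊥⁰)` and `(⊤⁰,⊤⁰)`.
-/

variable {s : Set (MZ × MZ)}

lemma Sub0.neg_mem (hs : Sub0 s) {x : MZ × MZ} (hx : x ∈ s) : (neg0 x.1, neg0 x.2) ∈ s :=
  (hs.2 x x hx hx).2.2.2.2

lemma Sub0.preimage_swap (hs : Sub0 s) : Sub0 (Prod.swap ⁻¹' s) :=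
  ⟨fun c => hs.1 c, fun p q hp hq => hs.2 p.swap q.swap hp hq⟩

lemma sub0_le0 : Sub0 {p : MZ × MZ | le0 p.1 p.2} := by
  refine ⟨fun _ => ⟨le_rfl, le_rfl⟩, ?_⟩
  rintro ⟨⟨a, b⟩, c, d⟩ ⟨⟨e, f⟩, g, h⟩ ⟨hac, hbd⟩ ⟨heg, hfh⟩
  exact ⟨⟨inf_le_inf hac heg, inf_le_inf hbd hfh⟩, ⟨sup_le_sup hac heg, sup_le_sup hbd hfh⟩,
    ⟨inf_le_inf hac heg, sup_le_sup hbd hfh⟩, ⟨sup_le_sup hac heg, inf_le_inf hbd hfh⟩,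
    ⟨hbd, hac⟩⟩

lemma sub0_ge0 : Sub0 {p : MZ × MZ | le0 p.2 p.1} :=
  sub0_le0.preimage_swap

lemma Sub0.subset_le0 (hs : Sub0 s) (hsub : s ⊆ {p | gam0 p.1 ≤ gam0 p.2}) :
    s ⊆ {p | le0 p.1 p.2} :=
  fun _ hx => ⟨hsub hx, hsub (hs.neg_mem hx)⟩

lemma Sub0.subset_ge0 (hs : Sub0 s) (hsub : s ⊆ {p | del0 p.1 ≤ del0 p.2}) :
    s ⊆ {p | le0 p.2 p.1} :=
  fun _ hx =>
    ⟨compl_le_compl_iff_le.mp (hsub (hs.neg_mem hx)), compl_le_compl_iff_le.mp (hsub hx)⟩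

lemma maxSub0In_iff_eq_of_greatest {target r : Set (MZ × MZ)} (hr : Sub0 r)
    (hr_sub : r ⊆ target) (hgreatest : ∀ t, Sub0 t → t ⊆ target → t ⊆ r) :
    MaxSub0In target s ↔ s = r := by
  constructor
  · rintro ⟨hs, hs_sub, hmax⟩
    exact (hmax r hr hr_sub (hgreatest s hs hs_sub)).symm
  · rintro rfl
    exact ⟨hr, hr_sub, fun t ht ht_sub hst => (hgreatest t ht ht_sub).antisymm hst⟩

theorem statement12 :
    (∀ s : Set (MZ × MZ), Sub0 s → ¬ s ⊆ {p | del0 p.1 ≤ gam0 p.2}) ∧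
      (∀ s : Set (MZ × MZ), Sub0 s → ¬ s ⊆ {p | gam0 p.1 ≤ del0 p.2}) ∧
      (∀ s : Set (MZ × MZ),
        MaxSub0In {p | gam0 p.1 ≤ gam0 p.2} s ↔ s = {p | le0 p.1 p.2}) ∧
      (∀ s : Set (MZ × MZ),
        MaxSub0In {p | del0 p.1 ≤ del0 p.2} s ↔ s = {p | le0 p.2 p.1}) := by
  refine ⟨fun s hs hsub => ?_, fun s hs hsub => ?_, fun s => ?_, fun s => ?_⟩
  · exact absurd (hsub (hs.1 (false, false))) (by decide)
  · exact absurd (hsub (hs.1 (true, true))) (by decide)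
  · exact maxSub0In_iff_eq_of_greatest sub0_le0 (fun _ hx => hx.1)
      fun _ ht ht_sub => ht.subset_le0 ht_sub
  · exact maxSub0In_iff_eq_of_greatest sub0_ge0 (fun _ hx => compl_le_compl hx.2)
      fun _ ht ht_sub => ht.subset_ge0 ht_sub

end ExpandingBelnap
end
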